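/- arXiv:2311.04609 — 2 statements merged into one kernel-verified Lean document; each statement's English description precedes it below -/
import Mathlib

section
/- Feasibility under box uncertainty (sufficiency direction of Theorem 4.2): let δ_B > 0. If there exist an index M ∈ {1,…,n} and λ ≥ 0 such that the matrix A − λ(e₀e₀ᵀ − e_M e_Mᵀ) is positive semidefinite, then for all ζ ∈ ℝⁿ with ‖ζ‖_∞ ≤ δ_B one has ((δ_B μ⁽⁰⁾ + Σ_{j=1}^n ζⱼ μ⁽ʲ⁾)ᵀ x)² ≥ τ² δ_B². -/
open Matrix

noncomputable section

/-- `a j = (μ⁽ʲ⁾)ᵀ x`, the dot product of the `j`-th expected-return vector with `x`. -/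
def avec (n : ℕ) (x : Fin n → ℝ) (μ : Fin (n + 1) → Fin n → ℝ) : Fin (n + 1) → ℝ :=
  fun j => μ j ⬝ᵥ x

/-- The symmetric matrix `A = a aᵀ - τ² e₀ e₀ᵀ`. -/
def Amat (n : ℕ) (x : Fin n → ℝ) (τ : ℝ) (μ : Fin (n + 1) → Fin n → ℝ) :
    Matrix (Fin (n + 1)) (Fin (n + 1)) ℝ :=
  Matrix.of fun i j =>
    avec n x μ i * avec n x μ j - if i = 0 ∧ j = 0 then τ ^ 2 else 0

/-- The matrix `B⁽ᴱ⁾ = diag(1, -1, …, -1)`. -/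
def BE (n : ℕ) : Matrix (Fin (n + 1)) (Fin (n + 1)) ℝ :=
  Matrix.diagonal fun i => if i = 0 then 1 else -1

/-- The matrix `B⁽ᴾ⁾ = e₀e₀ᵀ - J`: `(0,0)`-entry `1`, entries `-1` for `i, j ≥ 1`,
zero elsewhere. -/
def BP (n : ℕ) : Matrix (Fin (n + 1)) (Fin (n + 1)) ℝ :=
  Matrix.of fun i j =>
    if i = 0 ∧ j = 0 then 1 else if i ≠ 0 ∧ j ≠ 0 then -1 else 0

/-- A real matrix is positive semidefinite: `zᵀ M z ≥ 0` for all `z`. -/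
def IsPSD {d : ℕ} (M : Matrix (Fin d) (Fin d) ℝ) : Prop :=
  ∀ z : Fin d → ℝ, 0 ≤ z ⬝ᵥ M *ᵥ z

/-! The easy direction of the S-lemma: at `z = (δ_B, ζ)` the quadratic form of
`A - λ (e₀e₀ᵀ - e_M e_Mᵀ)` equals `(aᵀz)² - τ²δ_B² - λ (δ_B² - ζ_M²)`, and the box constraint
makes the `λ`-term nonpositive, while `aᵀz` is exactly the robust return
`(δ_B μ⁽⁰⁾ + Σ ζⱼ μ⁽ʲ⁾)ᵀ x`. -/

lemma dotProduct_single_mulVec_self {ι R : Type*} [Fintype ι] [DecidableEq ι] [CommSemiring R]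
    (i : ι) (c : R) (z : ι → R) : z ⬝ᵥ single i i c *ᵥ z = c * z i ^ 2 := by
  rw [single_mulVec_eq, dotProduct_smul, dotProduct_single, smul_eq_mul]
  ring

lemma dotProduct_vecMulVec_mulVec_self {ι R : Type*} [Fintype ι] [CommSemiring R]
    (a z : ι → R) : z ⬝ᵥ vecMulVec a a *ᵥ z = (a ⬝ᵥ z) ^ 2 := by
  rw [vecMulVec_mulVec, op_smul_eq_smul, dotProduct_smul, smul_eq_mul, dotProduct_comm z a, sq]

lemma IsPSD.dotProduct_mulVec_nonneg_of_sub_smul {d : ℕ} {A B : Matrix (Fin d) (Fin d) ℝ}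
    {lam : ℝ} (hAB : IsPSD (A - lam • B)) (hlam : 0 ≤ lam) {z : Fin d → ℝ}
    (hB : 0 ≤ z ⬝ᵥ B *ᵥ z) : 0 ≤ z ⬝ᵥ A *ᵥ z := by
  have hz := hAB z
  rw [sub_mulVec, dotProduct_sub, smul_mulVec, dotProduct_smul, smul_eq_mul] at hz
  linarith [mul_nonneg hlam hB]

lemma Amat_eq_vecMulVec_sub (n : ℕ) (x : Fin n → ℝ) (τ : ℝ) (μ : Fin (n + 1) → Fin n → ℝ) :
    Amat n x τ μ = vecMulVec (avec n x μ) (avec n x μ) - τ ^ 2 • single 0 0 1 := by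
  ext i j
  simp [Amat, vecMulVec, single, ite_and, eq_comm]

lemma dotProduct_Amat_mulVec (n : ℕ) (x : Fin n → ℝ) (τ : ℝ) (μ : Fin (n + 1) → Fin n → ℝ)
    (z : Fin (n + 1) → ℝ) :
    z ⬝ᵥ Amat n x τ μ *ᵥ z = (avec n x μ ⬝ᵥ z) ^ 2 - τ ^ 2 * z 0 ^ 2 := by
  rw [Amat_eq_vecMulVec_sub, sub_mulVec, dotProduct_sub, smul_mulVec, dotProduct_smul,
    smul_eq_mul, dotProduct_vecMulVec_mulVec_self, dotProduct_single_mulVec_self, one_mul]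

lemma avec_dotProduct_cons (n : ℕ) (x : Fin n → ℝ) (μ : Fin (n + 1) → Fin n → ℝ) (δ : ℝ)
    (ζ : Fin n → ℝ) :
    avec n x μ ⬝ᵥ Fin.cons δ ζ = (δ • μ 0 + ∑ j, ζ j • μ j.succ) ⬝ᵥ x := by
  rw [add_dotProduct, sum_dotProduct, dotProduct, Fin.sum_univ_succ]
  simp only [avec, smul_dotProduct, smul_eq_mul, Fin.cons_zero, Fin.cons_succ, mul_comm]

theorem feasibility_box_sufficient_general (n : ℕ) (x : Fin n → ℝ) (τ : ℝ)
    (μ : Fin (n + 1) → Fin n → ℝ) (δB : ℝ)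
    (h : ∃ M : Fin n, ∃ lam : ℝ, 0 ≤ lam ∧
        IsPSD (Amat n x τ μ -
          lam • (Matrix.single (0 : Fin (n + 1)) (0 : Fin (n + 1)) (1 : ℝ) -
            Matrix.single M.succ M.succ (1 : ℝ)))) :
    ∀ ζ : Fin n → ℝ, (∀ j, |ζ j| ≤ δB) →
      τ ^ 2 * δB ^ 2 ≤ ((δB • μ 0 + ∑ j : Fin n, ζ j • μ j.succ) ⬝ᵥ x) ^ 2 := by
  obtain ⟨M, lam, hlam, hpsd⟩ := h
  intro ζ hζ
  have hbox : ζ M ^ 2 ≤ δB ^ 2 := sq_le_sq' (neg_le_of_abs_le (hζ M)) (le_of_abs_le (hζ M))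
  have hz := hpsd.dotProduct_mulVec_nonneg_of_sub_smul hlam (z := Fin.cons δB ζ) <| by
    rw [sub_mulVec, dotProduct_sub, dotProduct_single_mulVec_self,
      dotProduct_single_mulVec_self]
    simpa using hbox
  rw [dotProduct_Amat_mulVec, avec_dotProduct_cons] at hz
  simpa using hz

/-- **Theorem 4.2**, sufficiency direction (feasibility under box uncertainty): if for some
index `M ∈ {1, …, n}` and some `λ ≥ 0` the matrix `A - λ (e₀e₀ᵀ - e_M e_Mᵀ)` is positive
semidefinite, then the robust constraint holds for all `ζ` with `‖ζ‖_∞ ≤ δ_B`. -/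
theorem feasibility_box_sufficient (n : ℕ) (hn : 1 ≤ n) (x : Fin n → ℝ) (τ : ℝ)
    (μ : Fin (n + 1) → Fin n → ℝ) (δB : ℝ) (hδB : 0 < δB)
    (h : ∃ M : Fin n, ∃ lam : ℝ, 0 ≤ lam ∧
        IsPSD (Amat n x τ μ -
          lam • (Matrix.single (0 : Fin (n + 1)) (0 : Fin (n + 1)) (1 : ℝ) -
            Matrix.single M.succ M.succ (1 : ℝ)))) :
    ∀ ζ : Fin n → ℝ, (∀ j, |ζ j| ≤ δB) →
      τ ^ 2 * δB ^ 2 ≤ ((δB • μ 0 + ∑ j : Fin n, ζ j • μ j.succ) ⬝ᵥ x) ^ 2 :=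
  feasibility_box_sufficient_general n x τ μ δB h
end
end

section
/- Exact feasibility characterization under "box ∩ ellipsoidal" uncertainty when the ellipsoid is contained in the box: let δ_B, δ_E > 0 with δ_E ≤ δ_B. Then the set {ζ ∈ ℝⁿ : ‖ζ‖_∞ ≤ δ_B and ‖ζ‖₂ ≤ δ_E} equals {ζ ∈ ℝⁿ : ‖ζ‖₂ ≤ δ_E}, and the robust feasibility condition "for all ζ with ‖ζ‖_∞ ≤ δ_B and ‖ζ‖₂ ≤ δ_E, ((δ_E μ⁽⁰⁾ + Σ_{j=1}^n ζⱼ μ⁽ʲ⁾)ᵀ x)² ≥ τ² δ_E²" holds if and only if there exists λ ≥ 0 such that A − λ B⁽ᴱ⁾ is positive semidefinite. -/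
/-!
Write `a = (a₀, v)` with `v = (a₁, …, aₙ)`. Since `|⟨ζ, v⟩| ≤ ‖ζ‖ ‖v‖` with equality along `v`, the
robust condition says that `|a₀ + t ‖v‖| ≥ |τ|` for all `|t| ≤ 1`, i.e. `τ = 0` or
`‖v‖ + |τ| ≤ |a₀|`. In the first case `λ = 0` works; in the second the multiplier
`λ = ‖v‖ (|a₀| - ‖v‖)` makes `zᵀ (A - λ B⁽ᴱ⁾) z`, multiplied by `‖v‖ |a₀|`, a sum of nonnegative
terms. Conversely, evaluating the quadratic form at `z = (δ_E, ζ)` gives the robust inequality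
(the easy half of the S-lemma). The box plays no role because the ball lies inside it.
-/

open Matrix

noncomputable section

open WithLp (toLp)
open scoped InnerProductSpace

section QuadraticForms

variable {ι R : Type*} [Fintype ι] [CommSemiring R]

lemma dotProduct_vecMulVec_self_mulVec (a z : ι → R) :
    z ⬝ᵥ vecMulVec a a *ᵥ z = (a ⬝ᵥ z) ^ 2 := by
  rw [vecMulVec_mulVec, dotProduct_smul, op_smul_eq_mul, dotProduct_comm, sq]

lemma dotProduct_diagonal_mulVec [DecidableEq ι] (d z : ι → R) :
    z ⬝ᵥ diagonal d *ᵥ z = ∑ i, d i * z i ^ 2 := by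
  simp only [mulVec_diagonal, dotProduct, sq]
  exact Finset.sum_congr rfl fun i _ => by ring

end QuadraticForms

section EuclideanCoordinates

variable {ι : Type*} [Fintype ι]

lemma norm_toLp_eq_sqrt_sum_sq (ζ : ι → ℝ) : ‖toLp 2 ζ‖ = √(∑ i, ζ i ^ 2) := by
  simp [EuclideanSpace.norm_eq]

lemma abs_le_sqrt_sum_sq (ζ : ι → ℝ) (j : ι) : |ζ j| ≤ √(∑ i, ζ i ^ 2) := by
  simpa [norm_toLp_eq_sqrt_sum_sq] using PiLp.norm_apply_le (toLp 2 ζ) j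

lemma real_inner_toLp_toLp (v w : ι → ℝ) : ⟪toLp 2 v, toLp 2 w⟫_ℝ = v ⬝ᵥ w := by
  rw [EuclideanSpace.inner_toLp_toLp, star_trivial, dotProduct_comm]

end EuclideanCoordinates

lemma eq_zero_or_add_abs_le_abs_of_forall_sq_le {a₀ b τ : ℝ}
    (h : ∀ t, |t| ≤ 1 → τ ^ 2 ≤ (a₀ + t * b) ^ 2) : τ = 0 ∨ b + |τ| ≤ |a₀| := by
  by_cases hlt : |a₀| < b
  · left
    have hb : 0 < b := (abs_nonneg a₀).trans_lt hlt
    have ht : |-a₀ / b| ≤ 1 := by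
      rw [abs_div, abs_neg, abs_of_pos hb, div_le_one hb]
      exact hlt.le
    have hτ := h _ ht
    rw [div_mul_cancel₀ _ hb.ne', add_neg_cancel, sq_eq_zero_iff.mpr rfl] at hτ
    exact pow_eq_zero_iff two_ne_zero |>.mp (le_antisymm hτ (sq_nonneg τ))
  · right
    push Not at hlt
    rcases le_total 0 a₀ with ha | ha
    · have hτ := sq_le_sq.mp (h (-1) (by norm_num))
      rw [abs_of_nonneg ha] at hlt ⊢
      rw [abs_of_nonneg (show 0 ≤ a₀ + -1 * b by linarith)] at hτ
      linarith
    · have hτ := sq_le_sq.mp (h 1 (by norm_num))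
      rw [abs_of_nonpos ha] at hlt ⊢
      rw [abs_of_nonpos (show a₀ + 1 * b ≤ 0 by linarith)] at hτ
      linarith

section InnerProductSpace

variable {E : Type*} [NormedAddCommGroup E] [InnerProductSpace ℝ E]

lemma eq_zero_or_norm_add_abs_le_abs_of_forall_norm_le {a₀ τ δ : ℝ} {v : E} (hδ : 0 < δ)
    (h : ∀ w : E, ‖w‖ ≤ δ → τ ^ 2 * δ ^ 2 ≤ (δ * a₀ + ⟪w, v⟫_ℝ) ^ 2) :
    τ = 0 ∨ ‖v‖ + |τ| ≤ |a₀| := by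
  refine eq_zero_or_add_abs_le_abs_of_forall_sq_le fun t ht => ?_
  set w := (δ * t / ‖v‖) • v
  have hw : ‖w‖ ≤ δ := by
    rcases eq_or_ne v 0 with rfl | hv
    · simpa [w] using hδ.le
    · rw [norm_smul, Real.norm_eq_abs, abs_div, abs_norm,
        div_mul_cancel₀ _ (norm_ne_zero_iff.mpr hv), abs_mul, abs_of_pos hδ]
      exact mul_le_of_le_one_right hδ.le ht
  have hwv : ⟪w, v⟫_ℝ = δ * (t * ‖v‖) := by
    rcases eq_or_ne v 0 with rfl | hv
    · simp
    · rw [real_inner_smul_left, real_inner_self_eq_norm_sq]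
      field_simp
  have hτ := h w hw
  rw [hwv, ← mul_add, mul_pow, mul_comm] at hτ
  exact le_of_mul_le_mul_left hτ (by positivity)

lemma norm_mul_sub_mul_le_sq_sub {a₀ τ : ℝ} {v : E} (hτ : ‖v‖ + |τ| ≤ |a₀|) (u : ℝ) (w : E) :
    ‖v‖ * (|a₀| - ‖v‖) * (u ^ 2 - ‖w‖ ^ 2) ≤ (u * a₀ + ⟪w, v⟫_ℝ) ^ 2 - τ ^ 2 * u ^ 2 := by
  set b := ‖v‖
  set s := ⟪w, v⟫_ℝ
  have hτb : τ ^ 2 ≤ (|a₀| - b) ^ 2 :=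
    sq_le_sq' (by linarith [neg_abs_le τ]) (by linarith [le_abs_self τ])
  have hs : s ^ 2 ≤ b ^ 2 * ‖w‖ ^ 2 := by
    have := pow_le_pow_left₀ (abs_nonneg s) (abs_real_inner_le_norm w v) 2
    rwa [sq_abs, mul_pow, mul_comm] at this
  rcases (show 0 ≤ b from norm_nonneg v).eq_or_lt with hb | hb
  · have hs0 : s = 0 := by simp [s, norm_eq_zero.mp hb.symm]
    rw [← hb, sub_zero, sq_abs] at hτb
    rw [← hb, hs0]
    nlinarith [mul_le_mul_of_nonneg_right hτb (sq_nonneg u)]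
  · have hA : 0 < |a₀| := by linarith [abs_nonneg τ]
    have hsos : 0 ≤ b * |a₀| *
        ((u * a₀ + s) ^ 2 - τ ^ 2 * u ^ 2 - b * (|a₀| - b) * (u ^ 2 - ‖w‖ ^ 2)) := by
      have key : b * |a₀| *
          ((u * a₀ + s) ^ 2 - τ ^ 2 * u ^ 2 - b * (|a₀| - b) * (u ^ 2 - ‖w‖ ^ 2)) =
            (|a₀| * s + u * a₀ * b) ^ 2 + b * |a₀| * ((|a₀| - b) ^ 2 - τ ^ 2) * u ^ 2
              + |a₀| * (|a₀| - b) * (b ^ 2 * ‖w‖ ^ 2 - s ^ 2) := by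
        linear_combination (b ^ 2 * u ^ 2 - |a₀| * b * u ^ 2) * sq_abs a₀
      have : 0 ≤ |a₀| - b := by linarith [abs_nonneg τ]
      have : 0 ≤ (|a₀| - b) ^ 2 - τ ^ 2 := by linarith
      have : 0 ≤ b ^ 2 * ‖w‖ ^ 2 - s ^ 2 := by linarith
      rw [key]
      positivity
    linarith [nonneg_of_mul_nonneg_right hsos (by positivity)]

end InnerProductSpace

lemma Amat_eq_vecMulVec_sub_diagonal (n : ℕ) (x : Fin n → ℝ) (τ : ℝ)
    (μ : Fin (n + 1) → Fin n → ℝ) :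
    Amat n x τ μ = vecMulVec (avec n x μ) (avec n x μ) - diagonal (Pi.single 0 (τ ^ 2)) := by
  ext i j
  by_cases hi : i = 0 <;> by_cases hj : j = 0 <;>
    simp [Amat, vecMulVec_apply, diagonal_apply, hi, hj, eq_comm]

lemma cons_dotProduct_Amat_sub_smul_BE_mulVec (n : ℕ) (x : Fin n → ℝ) (τ : ℝ)
    (μ : Fin (n + 1) → Fin n → ℝ) (lam u : ℝ) (w : Fin n → ℝ) :
    Fin.cons u w ⬝ᵥ (Amat n x τ μ - lam • BE n) *ᵥ Fin.cons u w =
      (u * avec n x μ 0 + ⟪toLp 2 w, toLp 2 (Fin.tail (avec n x μ))⟫_ℝ) ^ 2 - τ ^ 2 * u ^ 2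
        - lam * (u ^ 2 - ‖toLp 2 w‖ ^ 2) := by
  rw [Amat_eq_vecMulVec_sub_diagonal, BE, sub_mulVec, sub_mulVec, smul_mulVec, dotProduct_sub,
    dotProduct_sub, dotProduct_smul, dotProduct_vecMulVec_self_mulVec, dotProduct_diagonal_mulVec,
    dotProduct_diagonal_mulVec, real_inner_toLp_toLp, EuclideanSpace.real_norm_sq_eq]
  simp [Fin.sum_univ_succ, dotProduct, Fin.tail, Pi.single_apply, sub_eq_add_neg, mul_comm]

lemma smul_add_sum_smul_dotProduct (n : ℕ) (x : Fin n → ℝ) (μ : Fin (n + 1) → Fin n → ℝ)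
    (δ : ℝ) (ζ : Fin n → ℝ) :
    (δ • μ 0 + ∑ j : Fin n, ζ j • μ j.succ) ⬝ᵥ x =
      δ * avec n x μ 0 + ⟪toLp 2 ζ, toLp 2 (Fin.tail (avec n x μ))⟫_ℝ := by
  simp only [add_dotProduct, sum_dotProduct, smul_dotProduct, smul_eq_mul, real_inner_toLp_toLp]
  rfl

theorem feasibility_box_ellipsoid_exact_general (n : ℕ) (x : Fin n → ℝ) (τ : ℝ)
    (μ : Fin (n + 1) → Fin n → ℝ) (δB δE : ℝ) (hδE : 0 < δE)
    (hle : δE ≤ δB) :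
    ({ζ : Fin n → ℝ | (∀ j, |ζ j| ≤ δB) ∧ Real.sqrt (∑ j, ζ j ^ 2) ≤ δE} =
      {ζ : Fin n → ℝ | Real.sqrt (∑ j, ζ j ^ 2) ≤ δE}) ∧
    ((∀ ζ : Fin n → ℝ, (∀ j, |ζ j| ≤ δB) → Real.sqrt (∑ j, ζ j ^ 2) ≤ δE →
        τ ^ 2 * δE ^ 2 ≤ ((δE • μ 0 + ∑ j : Fin n, ζ j • μ j.succ) ⬝ᵥ x) ^ 2) ↔
      ∃ lam : ℝ, 0 ≤ lam ∧ IsPSD (Amat n x τ μ - lam • BE n)) := by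
  set a₀ := avec n x μ 0
  set v : EuclideanSpace ℝ (Fin n) := toLp 2 (Fin.tail (avec n x μ))
  have hball (ζ : Fin n → ℝ) (hζ : √(∑ j, ζ j ^ 2) ≤ δE) (j : Fin n) : |ζ j| ≤ δB :=
    (abs_le_sqrt_sum_sq ζ j).trans (hζ.trans hle)
  refine ⟨Set.ext fun ζ => ⟨And.right, fun hζ => ⟨hball ζ hζ, hζ⟩⟩, fun hrob => ?_, ?_⟩
  · have hcond : τ = 0 ∨ ‖v‖ + |τ| ≤ |a₀| := by
      refine eq_zero_or_norm_add_abs_le_abs_of_forall_norm_le hδE fun w hw => ?_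
      rw [← WithLp.toLp_ofLp 2 w, norm_toLp_eq_sqrt_sum_sq] at hw
      have hrobw := hrob w.ofLp (hball _ hw) hw
      rwa [smul_add_sum_smul_dotProduct] at hrobw
    rcases hcond with rfl | hτ
    · refine ⟨0, le_rfl, fun z => ?_⟩
      rw [← Fin.cons_self_tail z, cons_dotProduct_Amat_sub_smul_BE_mulVec]
      simp [sq_nonneg]
    · refine ⟨‖v‖ * (|a₀| - ‖v‖), mul_nonneg (norm_nonneg v) (by linarith [abs_nonneg τ]),
        fun z => ?_⟩
      rw [← Fin.cons_self_tail z, cons_dotProduct_Amat_sub_smul_BE_mulVec]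
      linarith [norm_mul_sub_mul_le_sq_sub hτ (z 0) (toLp 2 (Fin.tail z))]
  · rintro ⟨lam, hlam, hpsd⟩ ζ - hζ
    have hq := hpsd (Fin.cons δE ζ)
    rw [cons_dotProduct_Amat_sub_smul_BE_mulVec] at hq
    rw [← norm_toLp_eq_sqrt_sum_sq] at hζ
    rw [smul_add_sum_smul_dotProduct]
    nlinarith [mul_nonneg hlam (sub_nonneg.mpr (pow_le_pow_left₀ (norm_nonneg _) hζ 2))]

/-- Exact feasibility characterization under "box ∩ ellipsoidal" uncertainty when the
ellipsoid is contained in the box (`δ_E ≤ δ_B`): the intersection equals the ellipsoid,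
and the robust feasibility condition on the intersection holds iff there is `λ ≥ 0` with
`A - λ B⁽ᴱ⁾` positive semidefinite. -/
theorem feasibility_box_ellipsoid_exact (n : ℕ) (hn : 1 ≤ n) (x : Fin n → ℝ) (τ : ℝ)
    (μ : Fin (n + 1) → Fin n → ℝ) (δB δE : ℝ) (hδB : 0 < δB) (hδE : 0 < δE)
    (hle : δE ≤ δB) :
    ({ζ : Fin n → ℝ | (∀ j, |ζ j| ≤ δB) ∧ Real.sqrt (∑ j, ζ j ^ 2) ≤ δE} =
      {ζ : Fin n → ℝ | Real.sqrt (∑ j, ζ j ^ 2) ≤ δE}) ∧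
    ((∀ ζ : Fin n → ℝ, (∀ j, |ζ j| ≤ δB) → Real.sqrt (∑ j, ζ j ^ 2) ≤ δE →
        τ ^ 2 * δE ^ 2 ≤ ((δE • μ 0 + ∑ j : Fin n, ζ j • μ j.succ) ⬝ᵥ x) ^ 2) ↔
      ∃ lam : ℝ, 0 ≤ lam ∧ IsPSD (Amat n x τ μ - lam • BE n)) :=
  feasibility_box_ellipsoid_exact_general n x τ μ δB δE hδE hle
end
end
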